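/- arXiv:2002.05969 — 3 statements merged into one kernel-verified Lean document; each statement's English description precedes it below -/
import Mathlib

section
/- Suppose the embedding method models all unions of A₁,…,A_M (i.e., for every S ⊆ {1,…,M} there exists q ∈ Ξ with dist(emb(w), q) ≤ β ⟺ w ∈ ⋃_{i∈S} Aᵢ, for all w ∈ V). Then the family of threshold sets 𝒞 = { {x ∈ ℝ^d : dist(x, q) ≤ β} : q ∈ Ξ } shatters some set of M points of ℝ^d; in particular, the VC dimension of 𝒞 is at least M. -/
/-
Pick a representative `v i ∈ A i` of each denotation set. Since the `A i` are disjoint,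
`v j` lies in `⋃ i ∈ S, A i` exactly when `j ∈ S`, so the query modelling this union cuts
out `S` from the embedded points `emb (v i)`. Hence every labelling of these points is
realised by a threshold set; in particular they are pairwise distinct, giving `M` points.
-/

/-- A family `𝒞` of subsets of `X` shatters a set `T ⊆ X` if for every `U ⊆ T`
there exists `C ∈ 𝒞` with `C ∩ T = U`. -/
def Shatters {X : Type*} (𝒞 : Set (Set X)) (T : Set X) : Prop :=
  ∀ U ⊆ T, ∃ C ∈ 𝒞, C ∩ T = U

def RealizesAllLabelings {ι X : Type*} (𝒞 : Set (Set X)) (f : ι → X) : Prop :=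
  ∀ S : Set ι, ∃ C ∈ 𝒞, ∀ i, f i ∈ C ↔ i ∈ S

namespace RealizesAllLabelings

variable {ι X : Type*} {𝒞 : Set (Set X)} {f : ι → X}

theorem injective (h : RealizesAllLabelings 𝒞 f) : Function.Injective f := by
  intro i j hij
  obtain ⟨C, -, hC⟩ := h {i}
  have hi : f i ∈ C := (hC i).mpr rfl
  exact ((hC j).mp (hij ▸ hi)).symm

theorem shatters_range (h : RealizesAllLabelings 𝒞 f) : Shatters 𝒞 (Set.range f) := by
  intro U hU
  obtain ⟨C, hC𝒞, hC⟩ := h {i | f i ∈ U}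
  refine ⟨C, hC𝒞, Set.Subset.antisymm ?_ fun x hx => ?_⟩
  · rintro _ ⟨hx, j, rfl⟩
    exact (hC j).mp hx
  · obtain ⟨j, rfl⟩ := hU hx
    exact ⟨(hC j).mpr hx, j, rfl⟩

theorem exists_shatters_ncard_eq [Finite ι] (h : RealizesAllLabelings 𝒞 f) :
    ∃ T : Set X, T.Finite ∧ T.ncard = Nat.card ι ∧ Shatters 𝒞 T :=
  ⟨Set.range f, Set.finite_range f, Set.ncard_range_of_injective h.injective,
    h.shatters_range⟩

end RealizesAllLabelings

open Function in
theorem Set.mem_biUnion_iff_of_pairwiseDisjoint {ι α : Type*} {A : ι → Set α}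
    (hdisj : Pairwise (Disjoint on A)) {j : ι} {x : α} (hx : x ∈ A j) (S : Set ι) :
    x ∈ ⋃ i ∈ S, A i ↔ j ∈ S := by
  refine ⟨fun hxS => ?_, fun hj => Set.mem_biUnion hj hx⟩
  obtain ⟨i, hiS, hxi⟩ := Set.mem_iUnion₂.mp hxS
  obtain rfl : i = j := hdisj.eq (Set.not_disjoint_iff.mpr ⟨x, hxi, hx⟩)
  exact hiS

theorem stmt_0_general {V Q : Type*} {d M : ℕ}
    (emb : V → (Fin d → ℝ)) (Ξ : Set Q) (dist : (Fin d → ℝ) → Q → ℝ) (β : ℝ)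
    (A : Fin M → Set V) (hne : ∀ i, (A i).Nonempty)
    (hdisj : ∀ i j, i ≠ j → Disjoint (A i) (A j))
    (hmodel : ∀ S : Set (Fin M), ∃ q ∈ Ξ,
      ∀ w : V, dist (emb w) q ≤ β ↔ w ∈ ⋃ i ∈ S, A i) :
    ∃ T : Set (Fin d → ℝ), T.Finite ∧ T.ncard = M ∧
      Shatters {C | ∃ q ∈ Ξ, C = {x | dist x q ≤ β}} T := by
  choose v hv using hne
  have hrealizes : RealizesAllLabelings {C | ∃ q ∈ Ξ, C = {x | dist x q ≤ β}} (emb ∘ v) := by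
    intro S
    obtain ⟨q, hqΞ, hq⟩ := hmodel S
    exact ⟨_, ⟨q, hqΞ, rfl⟩, fun j =>
      (hq (v j)).trans (Set.mem_biUnion_iff_of_pairwiseDisjoint hdisj (hv j) S)⟩
  simpa using hrealizes.exists_shatters_ncard_eq

theorem stmt_0 {V Q : Type*} {d M : ℕ} (hd : 0 < d) (hM : 0 < M)
    (emb : V → (Fin d → ℝ)) (Ξ : Set Q) (dist : (Fin d → ℝ) → Q → ℝ) (β : ℝ)
    (A : Fin M → Set V) (hne : ∀ i, (A i).Nonempty)
    (hdisj : ∀ i j, i ≠ j → Disjoint (A i) (A j))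
    (hmodel : ∀ S : Set (Fin M), ∃ q ∈ Ξ,
      ∀ w : V, dist (emb w) q ≤ β ↔ w ∈ ⋃ i ∈ S, A i) :
    ∃ T : Set (Fin d → ℝ), T.Finite ∧ T.ncard = M ∧
      Shatters {C | ∃ q ∈ Ξ, C = {x | dist x q ≤ β}} T :=
  stmt_0_general emb Ξ dist β A hne hdisj hmodel
end

section
/- Suppose the embedding method models all unions of A₁,…,A_M, and suppose additionally that every threshold set { x ∈ ℝ^d : dist(x, q) ≤ β }, for q ∈ Ξ, is an axis-aligned box in ℝ^d (a set of the form { x : a ⪯ x ⪯ b }). Then M ≤ 2d. In particular, to model all unions of M conjunctive queries with disjoint nonempty denotation sets using box-shaped threshold sets, the embedding dimension d must be at least M/2, i.e., linear in M. -/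
/-!
Pick one entity `v i ∈ A i` for each query. The union of all `A j` with `j ≠ i` is modelled by a
box that contains every `emb (v j)`, `j ≠ i`, but not `emb (v i)`; so `emb (v i)` leaves that box
through one of its `2 d` faces, i.e. it is, in some coordinate, strictly above or strictly below
all the other points. No two points can be strictly extreme on the same side of the same
coordinate, hence `M ≤ 2 d`.
-/

section StrictExtreme

variable {ι κ α : Type*}

/-- The `Bool` names the side: `true` for strictly largest in coordinate `k`, `false` for strictly
smallest. -/
def IsStrictExtremeAt [Preorder α] (x : ι → κ → α) (i : ι) : κ × Bool → Prop
  | (k, true) => ∀ j, j ≠ i → x j k < x i k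
  | (k, false) => ∀ j, j ≠ i → x i k < x j k

theorem IsStrictExtremeAt.unique [Preorder α] {x : ι → κ → α} {i i' : ι} {p : κ × Bool}
    (hi : IsStrictExtremeAt x i p) (hi' : IsStrictExtremeAt x i' p) : i = i' := by
  by_contra hne
  obtain ⟨k, _ | _⟩ := p
  · exact lt_asymm (hi i' (Ne.symm hne)) (hi' i hne)
  · exact lt_asymm (hi i' (Ne.symm hne)) (hi' i hne)

theorem exists_isStrictExtremeAt_of_notMem_Icc [LinearOrder α] {x : ι → κ → α} {i : ι}
    (a b : κ → α) (hothers : ∀ j, j ≠ i → x j ∈ Set.Icc a b) (hi : x i ∉ Set.Icc a b) :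
    ∃ p, IsStrictExtremeAt x i p := by
  rcases not_and_or.mp hi with hlow | hhigh
  · obtain ⟨k, hk⟩ : ∃ k, x i k < a k := by simpa [Pi.le_def] using hlow
    exact ⟨(k, false), fun j hj => hk.trans_le ((hothers j hj).1 k)⟩
  · obtain ⟨k, hk⟩ : ∃ k, b k < x i k := by simpa [Pi.le_def] using hhigh
    exact ⟨(k, true), fun j hj => ((hothers j hj).2 k).trans_lt hk⟩

theorem card_le_two_mul_card_of_forall_exists_isStrictExtremeAt [Fintype ι] [Fintype κ]
    [Preorder α] {x : ι → κ → α} (h : ∀ i, ∃ p, IsStrictExtremeAt x i p) :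
    Fintype.card ι ≤ 2 * Fintype.card κ := by
  choose p hp using h
  have hinj : Function.Injective p := fun i i' hii' => (hp i).unique (hii' ▸ hp i')
  simpa [Fintype.card_prod, mul_comm] using Fintype.card_le_of_injective p hinj

end StrictExtreme

theorem stmt_14_general {V Q : Type*} {d M : ℕ}
    (emb : V → (Fin d → ℝ)) (Ξ : Set Q) (dist : (Fin d → ℝ) → Q → ℝ) (β : ℝ)
    (A : Fin M → Set V) (hne : ∀ i, (A i).Nonempty)
    (hdisj : ∀ i j, i ≠ j → Disjoint (A i) (A j))
    (hmodel : ∀ S : Set (Fin M), ∃ q ∈ Ξ,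
      ∀ w : V, dist (emb w) q ≤ β ↔ w ∈ ⋃ i ∈ S, A i)
    (hbox : ∀ q ∈ Ξ, ∃ a b : Fin d → ℝ,
      {x : Fin d → ℝ | dist x q ≤ β} = {x | a ≤ x ∧ x ≤ b}) :
    M ≤ 2 * d := by
  choose v hv using hne
  have extreme : ∀ i, ∃ p, IsStrictExtremeAt (fun j => emb (v j)) i p := by
    intro i
    obtain ⟨q, hqΞ, hq⟩ := hmodel {i}ᶜ
    obtain ⟨a, b, hab⟩ := hbox q hqΞ
    have mem_Icc : ∀ w, emb w ∈ Set.Icc a b ↔ w ∈ ⋃ j ∈ ({i}ᶜ : Set (Fin M)), A j := fun w => by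
      rw [← hq w]
      exact (Set.ext_iff.mp hab (emb w)).symm
    refine exists_isStrictExtremeAt_of_notMem_Icc a b
      (fun j hj => (mem_Icc _).2 (Set.mem_biUnion hj (hv j))) ?_
    simp only [mem_Icc, Set.mem_iUnion, Set.mem_compl_singleton_iff, not_exists]
    exact fun j hji hj => Set.disjoint_left.mp (hdisj j i hji) hj (hv i)
  simpa using card_le_two_mul_card_of_forall_exists_isStrictExtremeAt extreme

theorem stmt_14 {V Q : Type*} {d M : ℕ} (hd : 0 < d) (hM : 0 < M)
    (emb : V → (Fin d → ℝ)) (Ξ : Set Q) (dist : (Fin d → ℝ) → Q → ℝ) (β : ℝ)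
    (A : Fin M → Set V) (hne : ∀ i, (A i).Nonempty)
    (hdisj : ∀ i j, i ≠ j → Disjoint (A i) (A j))
    (hmodel : ∀ S : Set (Fin M), ∃ q ∈ Ξ,
      ∀ w : V, dist (emb w) q ≤ β ↔ w ∈ ⋃ i ∈ S, A i)
    (hbox : ∀ q ∈ Ξ, ∃ a b : Fin d → ℝ,
      {x : Fin d → ℝ | dist x q ≤ β} = {x | a ≤ x ∧ x ≤ b}) :
    M ≤ 2 * d :=
  stmt_14_general emb Ξ dist β A hne hdisj hmodel hbox
end

section
/- Suppose the embedding method models all unions of A₁,…,A_M, and suppose additionally that every threshold set { x ∈ ℝ^d : dist(x, q) ≤ β }, for q ∈ Ξ, is a closed half-space { x : ⟨a, x⟩ ≤ b } of ℝ^d. Then M ≤ d + 1. In particular, to model all unions of M conjunctive queries with disjoint nonempty denotation sets using hyperplane-based threshold sets, the embedding dimension d must be at least M − 1, i.e., linear in M. -/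
/-
If `M ≥ d + 2`, the embeddings of one representative of each `Aᵢ` are affinely dependent, so by
Radon's theorem they split into two parts `I`, `Iᶜ` whose convex hulls meet. The threshold set
modelling `⋃ i ∈ I, Aᵢ` is a half-space containing the points indexed by `I` and missing those
indexed by `Iᶜ`; since both the half-space and its complement are convex, it separates the two
hulls, a contradiction.
-/

open Set Function

theorem mem_biUnion_iff_of_pairwise_disjoint {α ι : Type*} {A : ι → Set α}
    (hA : Pairwise (Disjoint on A)) {v : α} {i : ι} (hv : v ∈ A i) (S : Set ι) :
    v ∈ ⋃ j ∈ S, A j ↔ i ∈ S := by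
  refine ⟨fun h => ?_, fun hi => mem_biUnion hi hv⟩
  obtain ⟨j, hj, hvj⟩ := mem_iUnion₂.mp h
  obtain rfl : i = j := by_contra fun hij => (hA hij).notMem_of_mem_left hv hvj
  exact hj

section HalfSpaceShattering

variable {ι 𝕜 E : Type*} [Field 𝕜] [LinearOrder 𝕜] [IsStrictOrderedRing 𝕜]
  [AddCommGroup E] [Module 𝕜 E]

theorem affineIndependent_of_halfSpace_shatters {x : ι → E}
    (hx : ∀ I : Set ι, ∃ (f : Module.Dual 𝕜 E) (b : 𝕜), ∀ i, f (x i) ≤ b ↔ i ∈ I) :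
    AffineIndependent 𝕜 x := by
  by_contra hdep
  obtain ⟨I, p, hpI, hpIc⟩ := Convex.radon_partition hdep
  obtain ⟨f, b, hf⟩ := hx I
  have hle : f p ≤ b := by
    refine convexHull_min ?_ (convex_halfSpace_le f.isLinear b) hpI
    rintro _ ⟨i, hi, rfl⟩
    exact (hf i).2 hi
  have hgt : b < f p := by
    refine convexHull_min ?_ (convex_halfSpace_gt f.isLinear b) hpIc
    rintro _ ⟨i, hi, rfl⟩
    exact not_le.mp fun h => hi ((hf i).1 h)
  exact hle.not_gt hgt

theorem card_le_finrank_add_one_of_halfSpace_shatters [Fintype ι] [FiniteDimensional 𝕜 E]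
    {x : ι → E} (hx : ∀ I : Set ι, ∃ (f : Module.Dual 𝕜 E) (b : 𝕜), ∀ i, f (x i) ≤ b ↔ i ∈ I) :
    Fintype.card ι ≤ Module.finrank 𝕜 E + 1 :=
  (affineIndependent_of_halfSpace_shatters hx).card_le_finrank_succ.trans
    (Nat.add_le_add_right (Submodule.finrank_le _) 1)

end HalfSpaceShattering

theorem stmt_16_general {V Q : Type*} {d M : ℕ}
    (emb : V → (Fin d → ℝ)) (Ξ : Set Q) (dist : (Fin d → ℝ) → Q → ℝ) (β : ℝ)
    (A : Fin M → Set V) (hne : ∀ i, (A i).Nonempty)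
    (hdisj : ∀ i j, i ≠ j → Disjoint (A i) (A j))
    (hmodel : ∀ S : Set (Fin M), ∃ q ∈ Ξ,
      ∀ w : V, dist (emb w) q ≤ β ↔ w ∈ ⋃ i ∈ S, A i)
    (hhalf : ∀ q ∈ Ξ, ∃ (a : Fin d → ℝ) (b : ℝ),
      {x : Fin d → ℝ | dist x q ≤ β} = {x | ∑ i, a i * x i ≤ b}) :
    M ≤ d + 1 := by
  choose v hv using hne
  have hshatter : ∀ I : Set (Fin M), ∃ (f : Module.Dual ℝ (Fin d → ℝ)) (b : ℝ),
      ∀ i, f (emb (v i)) ≤ b ↔ i ∈ I := by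
    intro I
    obtain ⟨q, hqΞ, hq⟩ := hmodel I
    obtain ⟨a, b, hab⟩ := hhalf q hqΞ
    refine ⟨dotProductEquiv ℝ (Fin d) a, b, fun i => ?_⟩
    rw [← mem_biUnion_iff_of_pairwise_disjoint hdisj (hv i) I, ← hq]
    exact (Set.ext_iff.mp hab (emb (v i))).symm
  simpa using card_le_finrank_add_one_of_halfSpace_shatters hshatter

theorem stmt_16 {V Q : Type*} {d M : ℕ} (hd : 0 < d) (hM : 0 < M)
    (emb : V → (Fin d → ℝ)) (Ξ : Set Q) (dist : (Fin d → ℝ) → Q → ℝ) (β : ℝ)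
    (A : Fin M → Set V) (hne : ∀ i, (A i).Nonempty)
    (hdisj : ∀ i j, i ≠ j → Disjoint (A i) (A j))
    (hmodel : ∀ S : Set (Fin M), ∃ q ∈ Ξ,
      ∀ w : V, dist (emb w) q ≤ β ↔ w ∈ ⋃ i ∈ S, A i)
    (hhalf : ∀ q ∈ Ξ, ∃ (a : Fin d → ℝ) (b : ℝ),
      {x : Fin d → ℝ | dist x q ≤ β} = {x | ∑ i, a i * x i ≤ b}) :
    M ≤ d + 1 :=
  stmt_16_general emb Ξ dist β A hne hdisj hmodel hhalf
end
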